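/- arXiv:2207.11008 — 3 statements merged into one kernel-verified Lean document; each statement's English description precedes it below -/
import Mathlib

section
/- (Homological equation with Diophantine frequencies) Let γ ∈ (0,1], τ > 0, m ∈ ℝ, s ≥ s₀, and let Λ ∋ λ = (ω,ζ) ↦ R(λ) be a Lipschitz family of linear operators in OPM^m_{s+2τ+1}. For any λ ∈ Λ(γ,τ), define Ψ by Ψ̂(ℓ)_j^{j'} := −R̂(ℓ)_j^{j'} / ( i(ω·ℓ + ζ·(j−j')) ) for (ℓ,j,j') ≠ (0,j,j), and Ψ̂(0)_j^j := 0. Then Ψ ∈ OPM^m_s solves the homological equation ω·∂_φ Ψ + [ζ·∇, Ψ] + R = D_R (equivalently, i(ω·ℓ + ζ·(j−j')) Ψ̂(ℓ)_j^{j'} + R̂(ℓ)_j^{j'} = 0 for all (ℓ,j,j') ≠ (0,j,j)), and satisfies |Ψ|_{m,s}^{Lip(γ)} ≤ C γ^{−1} |R|_{m,s+2τ+1}^{Lip(γ)}. Moreover, if R leaves invariant the space of functions with zero average in x, so does Ψ. -/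
open scoped BigOperators ENNReal
open MeasureTheory Filter

noncomputable section

/-- Frequency lattice `ℤ^d`. -/
abbrev Zd (d : ℕ) := Fin d → ℤ
/-- Frequency lattice `ℤ²`. -/
abbrev Z2 := Fin 2 → ℤ
/-- Full frequency lattice `ℤ^d × ℤ²` of `𝕋^d × 𝕋²`. -/
abbrev Freq (d : ℕ) := Zd d × Z2
/-- A function on `𝕋^d × 𝕋²`, identified with its Fourier coefficients. -/
abbrev Fn (d : ℕ) := Freq d → ℂ
/-- The parameter space `ℝ^d × ℝ²` of `λ = (ω, ζ)`. -/
abbrev Param (d : ℕ) := (Fin d → ℝ) × (Fin 2 → ℝ)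
/-- A linear operator identified with its matrix coefficients `R̂(ℓ)_j^{j'}`. -/
abbrev OpCoef (d : ℕ) := Zd d → Z2 → Z2 → ℂ

/-- Coercion `ℝ → ℂ`. -/
def cR (x : ℝ) : ℂ := (x : ℂ)

/-- Euclidean norm `|ℓ|` of `ℓ ∈ ℤ^d`. -/
def lnorm {d : ℕ} (ℓ : Zd d) : ℝ := Real.sqrt (∑ i, ((ℓ i : ℝ)) ^ 2)
/-- Euclidean norm `|j|` of `j ∈ ℤ²`. -/
def jnorm (j : Z2) : ℝ := Real.sqrt (((j 0 : ℝ)) ^ 2 + ((j 1 : ℝ)) ^ 2)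
/-- `⟨ℓ⟩ := max{1, |ℓ|}`. -/
def lwt {d : ℕ} (ℓ : Zd d) : ℝ := max 1 (lnorm ℓ)
/-- `⟨j⟩ := max{1, |j|}`. -/
def jwt (j : Z2) : ℝ := max 1 (jnorm j)
/-- `⟨ℓ, j⟩ := max{1, |ℓ|, |j|}`. -/
def wt {d : ℕ} (ℓ : Zd d) (j : Z2) : ℝ := max 1 (max (lnorm ℓ) (jnorm j))

/-- Pairing `x · k` of a real vector with a lattice vector. -/
def dotP {n : ℕ} (x : Fin n → ℝ) (k : Fin n → ℤ) : ℝ := ∑ i, x i * (k i : ℝ)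

/-- The fixed Sobolev threshold `s₀ := ⌊(d+2)/2⌋ + 2`. -/
def s0 (d : ℕ) : ℝ := (((d + 2) / 2 : ℕ) : ℝ) + 2

/-- The Sobolev norm `‖u‖_s` (valued in `ℝ≥0∞`). -/
def sobNorm {d : ℕ} (s : ℝ) (u : Fn d) : ℝ≥0∞ :=
  (∑' p : Freq d, ENNReal.ofReal (wt p.1 p.2 ^ (2 * s)) * (‖u p‖₊ : ℝ≥0∞) ^ 2) ^ ((1 : ℝ) / 2)

/-- Zero average in the space variable `x`: membership in `H^s_0` (Fourier side). -/
def zeroAvg {d : ℕ} (u : Fn d) : Prop := ∀ ℓ : Zd d, u (ℓ, 0) = 0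

/-- The weighted Lipschitz Sobolev norm `‖u‖_s^{Lip(γ)}` of a family `λ ↦ u(λ)`. -/
def lipSob {d : ℕ} (γ s : ℝ) (Λ : Set (Param d)) (u : Param d → Fn d) : ℝ≥0∞ :=
  (⨆ lam ∈ Λ, sobNorm s (u lam)) +
    ENNReal.ofReal γ *
      ⨆ (l1 : Λ) (l2 : Λ) (_ : l1 ≠ l2),
        sobNorm (s - 1) (fun p => u (↑l1) p - u (↑l2) p) / edist (l1 : Param d) (l2 : Param d)

/-- The decay norm `|R|_{m,s}` of an operator (valued in `ℝ≥0∞`). -/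
def decayNorm {d : ℕ} (m s : ℝ) (R : OpCoef d) : ℝ≥0∞ :=
  ⨆ j' : Z2, ENNReal.ofReal (jwt j' ^ (-m)) *
    (∑' p : Freq d,
      ENNReal.ofReal (wt p.1 (p.2 - j') ^ (2 * s)) * (‖R p.1 p.2 j'‖₊ : ℝ≥0∞) ^ 2) ^ ((1 : ℝ) / 2)

/-- Difference of two operators. -/
def opSub {d : ℕ} (R Q : OpCoef d) : OpCoef d := fun ℓ j j' => R ℓ j j' - Q ℓ j j'

/-- The weighted Lipschitz decay norm `|R|_{m,s}^{Lip(γ)}` of a family `λ ↦ R(λ)`. -/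
def lipDecay {d : ℕ} (γ m s : ℝ) (Λ : Set (Param d)) (R : Param d → OpCoef d) : ℝ≥0∞ :=
  (⨆ lam ∈ Λ, decayNorm m s (R lam)) +
    ENNReal.ofReal γ *
      ⨆ (l1 : Λ) (l2 : Λ) (_ : l1 ≠ l2),
        decayNorm m (s - 1) (opSub (R ↑l1) (R ↑l2)) / edist (l1 : Param d) (l2 : Param d)

/-- The weighted Lipschitz norm `|q|^{Lip(γ)}` of a scalar family `λ ↦ q(λ)`. -/
def lipC {d : ℕ} (γ : ℝ) (Λ : Set (Param d)) (g : Param d → ℂ) : ℝ≥0∞ :=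
  (⨆ lam ∈ Λ, (‖g lam‖₊ : ℝ≥0∞)) +
    ENNReal.ofReal γ *
      ⨆ (l1 : Λ) (l2 : Λ) (_ : l1 ≠ l2),
        (‖g ↑l1 - g ↑l2‖₊ : ℝ≥0∞) / edist (l1 : Param d) (l2 : Param d)

/-- Action of an operator on a function. -/
def opApply {d : ℕ} (R : OpCoef d) (u : Fn d) : Fn d :=
  fun p => ∑' q : Freq d, R (p.1 - q.1) p.2 q.2 * u q

/-- Composition of operators (matrix product). -/
def opMul {d : ℕ} (R Q : OpCoef d) : OpCoef d :=
  fun ℓ j j' => ∑' k : Freq d, R (ℓ - k.1) j k.2 * Q k.1 k.2 j'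

/-- The identity operator. -/
def idOp {d : ℕ} : OpCoef d := fun ℓ j j' => if ℓ = 0 ∧ j = j' then 1 else 0

/-- Sum of two operators. -/
def opAdd {d : ℕ} (R Q : OpCoef d) : OpCoef d := fun ℓ j j' => R ℓ j j' + Q ℓ j j'

/-- The diagonal part `D_R` of an operator. -/
def diagPart {d : ℕ} (R : OpCoef d) : OpCoef d :=
  fun ℓ j j' => if ℓ = 0 ∧ j = j' then R 0 j j else 0

/-- Powers `R^n` of an operator. -/
def opPow {d : ℕ} (R : OpCoef d) : ℕ → OpCoef d
  | 0 => idOp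
  | n + 1 => opMul R (opPow R n)

/-- The smoothing truncation `Π_N` on functions. -/
def truncF {d : ℕ} (N : ℝ) (u : Fn d) : Fn d :=
  fun p => if wt p.1 p.2 ≤ N then u p else 0

/-- The truncation `Π_N` on operators. -/
def truncOp {d : ℕ} (N : ℝ) (R : OpCoef d) : OpCoef d :=
  fun ℓ j j' => if lnorm ℓ ≤ N ∧ jnorm (j - j') ≤ N then R ℓ j j' else 0

/-- Product of functions (convolution of Fourier coefficients). -/
def mulF {d : ℕ} (u v : Fn d) : Fn d :=
  fun p => ∑' q : Freq d, u q * v (p.1 - q.1, p.2 - q.2)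

/-- The multiplication operator `M_a` by a function `a`. -/
def mulOp {d : ℕ} (a : Fn d) : OpCoef d := fun ℓ j j' => a (ℓ, j - j')

/-- `ξ₁^⊥ · ξ₂` with `ξ^⊥ := (−ξ₂, ξ₁)`. -/
def perpDot (x y : Z2) : ℤ := (-(x 1)) * y 0 + x 0 * y 1
/-- `|j|²` for `j ∈ ℤ²`. -/
def nsq (j : Z2) : ℤ := j 0 ^ 2 + j 1 ^ 2

/-- Fourier multiplier of the bilinear map `(v,w) ↦ (∇_⊥(−Δ)^{−1}v)·∇w`. -/
def emult (x y : Z2) : ℂ :=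
  if x = 0 then 0 else Complex.I * (perpDot x y : ℂ) / (nsq x : ℂ)

/-- The Euler nonlinearity `N(v,w) = (∇_⊥(−Δ)^{−1}v)·∇w` in Fourier coefficients. -/
def eulerN {d : ℕ} (v w : Fn d) : Fn d :=
  fun p => ∑' q : Freq d, emult q.2 (p.2 - q.2) * v q * w (p.1 - q.1, p.2 - q.2)

/-- Coefficient-wise formulation of the (forced, rescaled) Navier–Stokes vorticity
equation `ω·∂_φ v + ζ·∇v − νΔv + ε(Π₀^⊥(u·∇v) − F) = 0`, `u = ∇_⊥(−Δ)^{−1}v`,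
on zero-average functions.  For `ν = 0` this is the Euler equation. -/
def SolvesNS {d : ℕ} (ω : Fin d → ℝ) (ζ : Fin 2 → ℝ) (ν ε : ℝ) (F v : Fn d) : Prop :=
  ∀ p : Freq d, p.2 ≠ 0 →
    (Complex.I * cR (dotP ω p.1 + dotP ζ p.2) + cR (ν * ((nsq p.2 : ℤ) : ℝ))) * v p
      + cR ε * (eulerN v v p - F p) = 0

/-- Fourier coefficients of `F = ∇ × f = ∂_{x₁} f₂ − ∂_{x₂} f₁`. -/
def curlC {d : ℕ} (fh : Freq d → Fin 2 → ℂ) : Fn d :=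
  fun p => Complex.I * (((p.2 0 : ℤ) : ℂ) * fh p 1 - ((p.2 1 : ℤ) : ℂ) * fh p 0)

/-- The set `Λ(γ,τ)` of Diophantine parameters in `Λ`. -/
def dioSet {d : ℕ} (Λ : Set (Param d)) (γ τ : ℝ) : Set (Param d) :=
  {lam | lam ∈ Λ ∧ ∀ (ℓ : Zd d) (j : Z2), ¬(ℓ = 0 ∧ j = 0) →
    γ / (lnorm ℓ + jnorm j) ^ τ ≤ |dotP lam.1 ℓ + dotP lam.2 j|}

/-- The KAM scales `N_{n-1}` (so `Nm1 N0 0 = N_{-1} = 1` and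
`Nm1 N0 (n+1) = N_n = N_0^{(3/2)^n}`). -/
def Nm1 (N0 : ℝ) : ℕ → ℝ := fun n => if n = 0 then 1 else N0 ^ (((3 : ℝ) / 2) ^ (n - 1))


/-- The solution `Ψ` of the homological equation, defined for `λ = (ω,ζ)` by
`Ψ̂(ℓ)_j^{j'} = −R̂(ℓ)_j^{j'}/(i(ω·ℓ + ζ·(j−j')))` off the diagonal and `0` on it. -/
def hPsi {d : ℕ} (lam : Param d) (R : OpCoef d) : OpCoef d :=
  fun ℓ j j' =>
    if ℓ = 0 ∧ j = j' then 0
    else - R ℓ j j' / (Complex.I * cR (dotP lam.1 ℓ + dotP lam.2 (j - j')))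

/-! Off the diagonal, `Ψ̂(ℓ)_j^{j'}` is `R̂(ℓ)_j^{j'}` divided by `i δ` with the small divisor
`δ = ω·ℓ + ζ·(j - j')`, and the Diophantine condition gives `|δ|⁻¹ ≤ 2^τ γ⁻¹ ⟨ℓ, j - j'⟩^τ`:
dividing costs `τ` derivatives. For the Lipschitz variation,
`1/δ(λ₁) - 1/δ(λ₂) = (δ(λ₂) - δ(λ₁)) / (δ(λ₁) δ(λ₂))` with
`|δ(λ₁) - δ(λ₂)| ≤ (d + 2) |λ₁ - λ₂| ⟨ℓ, j - j'⟩`, which costs `2τ + 1` derivatives and a second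
factor `γ⁻¹`, absorbed by the weight `γ` in front of the Lipschitz seminorm. Pointwise bounds on
the matrix coefficients pass to the decay norm column by column, by Minkowski's inequality in `ℓ²`.
-/

section Weights

variable {d : ℕ}

lemma one_le_wt (ℓ : Zd d) (j : Z2) : 1 ≤ wt ℓ j := le_max_left _ _

lemma wt_pos (ℓ : Zd d) (j : Z2) : 0 < wt ℓ j := one_pos.trans_le (one_le_wt ℓ j)

lemma lnorm_le_wt (ℓ : Zd d) (j : Z2) : lnorm ℓ ≤ wt ℓ j :=
  (le_max_left _ _).trans (le_max_right _ _)

lemma jnorm_le_wt (ℓ : Zd d) (j : Z2) : jnorm j ≤ wt ℓ j :=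
  (le_max_right _ _).trans (le_max_right _ _)

lemma abs_cast_le_lnorm (ℓ : Zd d) (i : Fin d) : |(ℓ i : ℝ)| ≤ lnorm ℓ := by
  rw [← Real.sqrt_sq_eq_abs]
  exact Real.sqrt_le_sqrt
    (Finset.single_le_sum (f := fun i => (ℓ i : ℝ) ^ 2) (fun _ _ => sq_nonneg _)
      (Finset.mem_univ i))

lemma abs_cast_le_jnorm (j : Z2) (i : Fin 2) : |(j i : ℝ)| ≤ jnorm j := by
  rw [← Real.sqrt_sq_eq_abs]
  refine Real.sqrt_le_sqrt ?_
  fin_cases i <;> simp [sq_nonneg]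

lemma lnorm_pos {ℓ : Zd d} (h : ℓ ≠ 0) : 0 < lnorm ℓ := by
  obtain ⟨i, hi⟩ := Function.ne_iff.mp h
  exact (abs_pos.mpr (by exact_mod_cast hi)).trans_le (abs_cast_le_lnorm ℓ i)

lemma jnorm_pos {j : Z2} (h : j ≠ 0) : 0 < jnorm j := by
  obtain ⟨i, hi⟩ := Function.ne_iff.mp h
  exact (abs_pos.mpr (by exact_mod_cast hi)).trans_le (abs_cast_le_jnorm j i)

end Weights

lemma dotP_sub_left {n : ℕ} (x y : Fin n → ℝ) (k : Fin n → ℤ) :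
    dotP (x - y) k = dotP x k - dotP y k := by
  simp only [dotP, Pi.sub_apply, sub_mul, Finset.sum_sub_distrib]

lemma abs_dotP_le {n : ℕ} (x : Fin n → ℝ) (k : Fin n → ℤ) {B : ℝ}
    (hk : ∀ i, |(k i : ℝ)| ≤ B) : |dotP x k| ≤ n * ‖x‖ * B := by
  calc |dotP x k| ≤ ∑ i, |x i * k i| := Finset.abs_sum_le_sum_abs _ _
    _ ≤ ∑ _i : Fin n, ‖x‖ * B := by
        refine Finset.sum_le_sum fun i _ => ?_
        rw [abs_mul, ← Real.norm_eq_abs]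
        exact mul_le_mul (norm_le_pi_norm x i) (hk i) (abs_nonneg _) (norm_nonneg _)
    _ = n * ‖x‖ * B := by simp [mul_assoc]

section SmallDivisor

variable {d : ℕ}

def smallDivisor (lam : Param d) (ℓ : Zd d) (k : Z2) : ℝ := dotP lam.1 ℓ + dotP lam.2 k

lemma abs_smallDivisor_sub_le (l₁ l₂ : Param d) (ℓ : Zd d) (k : Z2) :
    |smallDivisor l₁ ℓ k - smallDivisor l₂ ℓ k| ≤ ((d : ℝ) + 2) * dist l₁ l₂ * wt ℓ k := by
  have hω : |dotP (l₁.1 - l₂.1) ℓ| ≤ d * dist l₁ l₂ * wt ℓ k :=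
    (abs_dotP_le _ ℓ fun i => (abs_cast_le_lnorm ℓ i).trans (lnorm_le_wt ℓ k)).trans <|
      mul_le_mul_of_nonneg_right (mul_le_mul_of_nonneg_left
        ((norm_fst_le (l₁ - l₂)).trans_eq (dist_eq_norm l₁ l₂).symm) d.cast_nonneg) (wt_pos ℓ k).le
  have hζ : |dotP (l₁.2 - l₂.2) k| ≤ 2 * dist l₁ l₂ * wt ℓ k :=
    (abs_dotP_le _ k fun i => (abs_cast_le_jnorm k i).trans (jnorm_le_wt ℓ k)).trans <|
      mul_le_mul_of_nonneg_right (mul_le_mul_of_nonneg_left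
        ((norm_snd_le (l₁ - l₂)).trans_eq (dist_eq_norm l₁ l₂).symm) zero_le_two) (wt_pos ℓ k).le
  calc |smallDivisor l₁ ℓ k - smallDivisor l₂ ℓ k|
      = |dotP (l₁.1 - l₂.1) ℓ + dotP (l₁.2 - l₂.2) k| := by
        rw [dotP_sub_left, dotP_sub_left, smallDivisor, smallDivisor]; ring_nf
    _ ≤ d * dist l₁ l₂ * wt ℓ k + 2 * dist l₁ l₂ * wt ℓ k :=
        (abs_add_le _ _).trans (add_le_add hω hζ)
    _ = ((d : ℝ) + 2) * dist l₁ l₂ * wt ℓ k := by ring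

variable {Λ : Set (Param d)} {γ τ : ℝ} {lam : Param d} {ℓ : Zd d} {k : Z2}

lemma le_abs_smallDivisor_of_mem_dioSet (hγ : 0 ≤ γ) (hτ : 0 ≤ τ) (hlam : lam ∈ dioSet Λ γ τ)
    (hk : ¬(ℓ = 0 ∧ k = 0)) : γ / (2 * wt ℓ k) ^ τ ≤ |smallDivisor lam ℓ k| := by
  have hpos : 0 < lnorm ℓ + jnorm k := by
    rcases not_and_or.mp hk with h | h
    · exact add_pos_of_pos_of_nonneg (lnorm_pos h) (Real.sqrt_nonneg _)
    · exact add_pos_of_nonneg_of_pos (Real.sqrt_nonneg _) (jnorm_pos h)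
  refine le_trans ?_ (hlam.2 ℓ k hk)
  gcongr
  linarith [lnorm_le_wt ℓ k, jnorm_le_wt ℓ k]

lemma abs_smallDivisor_pos (hγ : 0 < γ) (hτ : 0 ≤ τ) (hlam : lam ∈ dioSet Λ γ τ)
    (hk : ¬(ℓ = 0 ∧ k = 0)) : 0 < |smallDivisor lam ℓ k| :=
  (div_pos hγ (Real.rpow_pos_of_pos (by linarith [wt_pos ℓ k]) τ)).trans_le
    (le_abs_smallDivisor_of_mem_dioSet hγ.le hτ hlam hk)

lemma inv_abs_smallDivisor_le (hγ : 0 < γ) (hτ : 0 ≤ τ) (hlam : lam ∈ dioSet Λ γ τ)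
    (hk : ¬(ℓ = 0 ∧ k = 0)) : |smallDivisor lam ℓ k|⁻¹ ≤ 2 ^ τ / γ * wt ℓ k ^ τ := by
  have h2w : 0 < (2 * wt ℓ k) ^ τ := Real.rpow_pos_of_pos (by linarith [wt_pos ℓ k]) τ
  calc |smallDivisor lam ℓ k|⁻¹ ≤ (γ / (2 * wt ℓ k) ^ τ)⁻¹ :=
        inv_anti₀ (div_pos hγ h2w) (le_abs_smallDivisor_of_mem_dioSet hγ.le hτ hlam hk)
    _ = 2 ^ τ / γ * wt ℓ k ^ τ := by
        rw [inv_div, Real.mul_rpow zero_le_two (wt_pos ℓ k).le]; ring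

end SmallDivisor

lemma norm_div_sub_div_le {𝕜 : Type*} [NormedField 𝕜] (a b : 𝕜) {z₁ z₂ : 𝕜}
    (h₁ : z₁ ≠ 0) (h₂ : z₂ ≠ 0) :
    ‖a / z₁ - b / z₂‖ ≤ ‖a - b‖ * ‖z₁‖⁻¹ + ‖b‖ * ‖z₁ - z₂‖ * (‖z₁‖⁻¹ * ‖z₂‖⁻¹) := by
  have hsplit : a / z₁ - b / z₂ = (a - b) / z₁ + b * (z₂ - z₁) / (z₁ * z₂) := by
    field_simp; ring
  rw [hsplit]
  refine (norm_add_le _ _).trans_eq ?_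
  rw [norm_div, norm_div, norm_mul, norm_mul, norm_sub_rev z₂, div_eq_mul_inv, div_eq_mul_inv,
    mul_inv]

section Homological

variable {d : ℕ} {Λ : Set (Param d)} {γ τ : ℝ} {lam : Param d}

lemma offDiag_iff_sub_ne_zero {ℓ : Zd d} {j j' : Z2} :
    ¬(ℓ = 0 ∧ j = j') ↔ ¬(ℓ = 0 ∧ j - j' = 0) := by
  rw [sub_eq_zero]

lemma hPsi_of_offDiag (R : OpCoef d) {ℓ : Zd d} {j j' : Z2} (h : ¬(ℓ = 0 ∧ j = j')) :
    hPsi lam R ℓ j j' = -R ℓ j j' / (Complex.I * cR (smallDivisor lam ℓ (j - j'))) :=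
  if_neg h

lemma norm_I_mul_cR (x : ℝ) : ‖Complex.I * cR x‖ = |x| := by
  simp [cR]

lemma I_mul_cR_ne_zero {x : ℝ} (hx : 0 < |x|) : Complex.I * cR x ≠ 0 := by
  rw [← norm_pos_iff, norm_I_mul_cR]; exact hx

lemma I_mul_smallDivisor_mul_hPsi_add (hγ : 0 < γ) (hτ : 0 ≤ τ) (hlam : lam ∈ dioSet Λ γ τ)
    (R : OpCoef d) {ℓ : Zd d} {j j' : Z2} (h : ¬(ℓ = 0 ∧ j = j')) :
    Complex.I * cR (smallDivisor lam ℓ (j - j')) * hPsi lam R ℓ j j' + R ℓ j j' = 0 := by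
  have hz := I_mul_cR_ne_zero
    (abs_smallDivisor_pos hγ hτ hlam (offDiag_iff_sub_ne_zero.mp h))
  rw [hPsi_of_offDiag R h, mul_div_cancel₀ _ hz, neg_add_cancel]

lemma norm_hPsi_le (hγ : 0 < γ) (hτ : 0 ≤ τ) (hlam : lam ∈ dioSet Λ γ τ)
    (R : OpCoef d) (ℓ : Zd d) (j j' : Z2) :
    ‖hPsi lam R ℓ j j'‖ ≤ 2 ^ τ / γ * wt ℓ (j - j') ^ τ * ‖R ℓ j j'‖ := by
  by_cases h : ℓ = 0 ∧ j = j'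
  · simp only [hPsi, if_pos h, norm_zero]
    have := wt_pos ℓ (j - j')
    positivity
  · rw [hPsi_of_offDiag R h, norm_div, norm_neg, norm_I_mul_cR, div_eq_mul_inv, mul_comm]
    exact mul_le_mul_of_nonneg_right
      (inv_abs_smallDivisor_le hγ hτ hlam (offDiag_iff_sub_ne_zero.mp h)) (norm_nonneg _)

lemma norm_hPsi_sub_hPsi_le (hγ : 0 < γ) (hτ : 0 ≤ τ) {l₁ l₂ : Param d}
    (hl₁ : l₁ ∈ dioSet Λ γ τ) (hl₂ : l₂ ∈ dioSet Λ γ τ) (R₁ R₂ : OpCoef d)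
    (ℓ : Zd d) (j j' : Z2) :
    ‖hPsi l₁ R₁ ℓ j j' - hPsi l₂ R₂ ℓ j j'‖ ≤
      2 ^ τ / γ * wt ℓ (j - j') ^ τ * ‖R₁ ℓ j j' - R₂ ℓ j j'‖ +
        ((d + 2) * (2 ^ τ / γ) ^ 2 * dist l₁ l₂) * wt ℓ (j - j') ^ (2 * τ + 1) * ‖R₂ ℓ j j'‖ := by
  set w := wt ℓ (j - j')
  have hw : 0 < w := wt_pos ℓ (j - j')
  by_cases h : ℓ = 0 ∧ j = j'
  · simp only [hPsi, if_pos h, sub_zero, norm_zero]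
    positivity
  have hk := offDiag_iff_sub_ne_zero.mp h
  set δ₁ := smallDivisor l₁ ℓ (j - j')
  set δ₂ := smallDivisor l₂ ℓ (j - j')
  have hδ₁ : |δ₁|⁻¹ ≤ 2 ^ τ / γ * w ^ τ := inv_abs_smallDivisor_le hγ hτ hl₁ hk
  have hδ₂ : |δ₂|⁻¹ ≤ 2 ^ τ / γ * w ^ τ := inv_abs_smallDivisor_le hγ hτ hl₂ hk
  have hδ₁₂ : |δ₁ - δ₂| ≤ (d + 2) * dist l₁ l₂ * w := abs_smallDivisor_sub_le l₁ l₂ ℓ (j - j')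
  have hz₁₂ : ‖Complex.I * cR δ₁ - Complex.I * cR δ₂‖ = |δ₁ - δ₂| := by
    rw [← mul_sub, ← norm_I_mul_cR]; simp [cR]
  rw [hPsi_of_offDiag R₁ h, hPsi_of_offDiag R₂ h]
  refine (norm_div_sub_div_le _ _
    (I_mul_cR_ne_zero (abs_smallDivisor_pos hγ hτ hl₁ hk))
    (I_mul_cR_ne_zero (abs_smallDivisor_pos hγ hτ hl₂ hk))).trans ?_
  rw [neg_sub_neg, norm_sub_rev, norm_neg, norm_I_mul_cR, norm_I_mul_cR, hz₁₂]
  have hw' : w ^ (2 * τ + 1) = w ^ τ * w ^ τ * w := by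
    rw [Real.rpow_add hw, Real.rpow_one, two_mul, Real.rpow_add hw]
  rw [hw']
  gcongr ?_ + ?_
  · rw [mul_comm]; gcongr
  · calc ‖R₂ ℓ j j'‖ * |δ₁ - δ₂| * (|δ₁|⁻¹ * |δ₂|⁻¹)
        ≤ ‖R₂ ℓ j j'‖ * ((d + 2) * dist l₁ l₂ * w) *
            ((2 ^ τ / γ * w ^ τ) * (2 ^ τ / γ * w ^ τ)) := by gcongr
      _ = _ := by ring

end Homological

section DecayNorm

variable {d : ℕ}

def weightedColumn (s : ℝ) (j' : Z2) (Q : OpCoef d) : Freq d → ℝ :=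
  fun p => wt p.1 (p.2 - j') ^ s * ‖Q p.1 p.2 j'‖

lemma decayNorm_eq_iSup_eLpNorm (m s : ℝ) (Q : OpCoef d) :
    decayNorm m s Q =
      ⨆ j' : Z2, ENNReal.ofReal (jwt j' ^ (-m)) * eLpNorm (weightedColumn s j' Q) 2 .count := by
  refine iSup_congr fun j' => congrArg _ ?_
  rw [eLpNorm_eq_lintegral_rpow_enorm_toReal two_ne_zero ENNReal.ofNat_ne_top, lintegral_count]
  refine congrArg₂ _ (tsum_congr fun p => ?_) (by norm_num)
  have hw := (wt_pos p.1 (p.2 - j')).le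
  rw [weightedColumn, Real.enorm_eq_ofReal (by positivity), ENNReal.toReal_ofNat,
    ENNReal.rpow_two, ENNReal.ofReal_mul (by positivity), mul_pow,
    ← ENNReal.ofReal_pow (by positivity), ← Real.rpow_mul_natCast hw, ofReal_norm,
    enorm_eq_nnnorm]
  norm_num [mul_comm]

lemma decayNorm_le_of_norm_le {Q A B : OpCoef d} {a b t u : ℝ} (ha : 0 ≤ a) (hb : 0 ≤ b)
    (m : ℝ) {s s₁ s₂ : ℝ} (hs₁ : s + t ≤ s₁) (hs₂ : s + u ≤ s₂)
    (h : ∀ ℓ j j', ‖Q ℓ j j'‖ ≤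
      a * wt ℓ (j - j') ^ t * ‖A ℓ j j'‖ + b * wt ℓ (j - j') ^ u * ‖B ℓ j j'‖) :
    decayNorm m s Q ≤
      ENNReal.ofReal a * decayNorm m s₁ A + ENNReal.ofReal b * decayNorm m s₂ B := by
  simp only [decayNorm_eq_iSup_eLpNorm]
  refine iSup_le fun j' => ?_
  have hcol : ∀ p, ‖weightedColumn s j' Q p‖ ≤
      (a • weightedColumn s₁ j' A + b • weightedColumn s₂ j' B) p := by
    intro p
    have hw := one_le_wt p.1 (p.2 - j')
    have hw₀ := (wt_pos p.1 (p.2 - j')).le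
    simp only [weightedColumn, Pi.add_apply, Pi.smul_apply, smul_eq_mul, norm_mul,
      Real.norm_eq_abs, abs_norm, abs_of_nonneg (Real.rpow_nonneg hw₀ s)]
    calc wt p.1 (p.2 - j') ^ s * ‖Q p.1 p.2 j'‖
        ≤ wt p.1 (p.2 - j') ^ s * (a * wt p.1 (p.2 - j') ^ t * ‖A p.1 p.2 j'‖
            + b * wt p.1 (p.2 - j') ^ u * ‖B p.1 p.2 j'‖) := by gcongr; exact h _ _ _
      _ = a * (wt p.1 (p.2 - j') ^ (s + t) * ‖A p.1 p.2 j'‖)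
            + b * (wt p.1 (p.2 - j') ^ (s + u) * ‖B p.1 p.2 j'‖) := by
          rw [Real.rpow_add (wt_pos _ _), Real.rpow_add (wt_pos _ _)]; ring
      _ ≤ _ := by gcongr
  have hmeas : ∀ f : Freq d → ℝ, AEStronglyMeasurable f .count := fun f =>
    (measurable_of_countable f).aestronglyMeasurable
  have hcolumn : eLpNorm (weightedColumn s j' Q) 2 .count ≤
      ENNReal.ofReal a * eLpNorm (weightedColumn s₁ j' A) 2 .count
        + ENNReal.ofReal b * eLpNorm (weightedColumn s₂ j' B) 2 .count := by
    refine (eLpNorm_mono_real hcol).trans ((eLpNorm_add_le ((hmeas _).const_smul a)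
      ((hmeas _).const_smul b) one_le_two).trans_eq ?_)
    rw [eLpNorm_const_smul, eLpNorm_const_smul, Real.enorm_eq_ofReal ha,
      Real.enorm_eq_ofReal hb]
  set c := ENNReal.ofReal (jwt j' ^ (-m))
  have hA : c * eLpNorm (weightedColumn s₁ j' A) 2 .count ≤
      ⨆ j'', ENNReal.ofReal (jwt j'' ^ (-m)) * eLpNorm (weightedColumn s₁ j'' A) 2 .count :=
    le_iSup (fun j'' => ENNReal.ofReal (jwt j'' ^ (-m)) * _) j'
  have hB : c * eLpNorm (weightedColumn s₂ j' B) 2 .count ≤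
      ⨆ j'', ENNReal.ofReal (jwt j'' ^ (-m)) * eLpNorm (weightedColumn s₂ j'' B) 2 .count :=
    le_iSup (fun j'' => ENNReal.ofReal (jwt j'' ^ (-m)) * _) j'
  calc c * eLpNorm (weightedColumn s j' Q) 2 .count
      ≤ c * (ENNReal.ofReal a * eLpNorm (weightedColumn s₁ j' A) 2 .count +
          ENNReal.ofReal b * eLpNorm (weightedColumn s₂ j' B) 2 .count) := by gcongr
    _ = ENNReal.ofReal a * (c * eLpNorm (weightedColumn s₁ j' A) 2 .count) +
          ENNReal.ofReal b * (c * eLpNorm (weightedColumn s₂ j' B) 2 .count) := by ring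
    _ ≤ _ := by gcongr

end DecayNorm

lemma lipDecay_le_of_decayNorm_le {d : ℕ} {γ m s s' c k : ℝ} (hγ : 0 ≤ γ) (hc : 0 ≤ c)
    (hk : 0 ≤ k) {Λ : Set (Param d)} {Q R : Param d → OpCoef d}
    (hsup : ∀ lam ∈ Λ, decayNorm m s (Q lam) ≤ ENNReal.ofReal c * decayNorm m s' (R lam))
    (hlip : ∀ l₁ ∈ Λ, ∀ l₂ ∈ Λ, decayNorm m (s - 1) (opSub (Q l₁) (Q l₂)) ≤
      ENNReal.ofReal c * decayNorm m (s' - 1) (opSub (R l₁) (R l₂)) +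
        ENNReal.ofReal (k * dist l₁ l₂) * decayNorm m s' (R l₂)) :
    lipDecay γ m s Λ Q ≤ ENNReal.ofReal (c + γ * k) * lipDecay γ m s' Λ R := by
  set supR := ⨆ lam ∈ Λ, decayNorm m s' (R lam)
  set lipR := ⨆ (l₁ : Λ) (l₂ : Λ) (_ : l₁ ≠ l₂),
    decayNorm m (s' - 1) (opSub (R l₁) (R l₂)) / edist (l₁ : Param d) l₂
  have hR : ∀ lam ∈ Λ, decayNorm m s' (R lam) ≤ supR := fun lam hlam =>
    le_iSup₂ (f := fun lam (_ : lam ∈ Λ) => decayNorm m s' (R lam)) lam hlam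
  have hsupQ : ⨆ lam ∈ Λ, decayNorm m s (Q lam) ≤ ENNReal.ofReal c * supR :=
    iSup₂_le fun lam hlam => (hsup lam hlam).trans (by gcongr; exact hR lam hlam)
  have hlipQ : ⨆ (l₁ : Λ) (l₂ : Λ) (_ : l₁ ≠ l₂),
      decayNorm m (s - 1) (opSub (Q l₁) (Q l₂)) / edist (l₁ : Param d) l₂ ≤
        ENNReal.ofReal c * lipR + ENNReal.ofReal k * supR := by
    refine iSup_le fun l₁ => iSup_le fun l₂ => iSup_le fun hne => ?_
    have he₀ : edist (l₁ : Param d) l₂ ≠ 0 := (edist_pos.mpr (Subtype.coe_injective.ne hne)).ne'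
    have hquot : decayNorm m (s' - 1) (opSub (R l₁) (R l₂)) / edist (l₁ : Param d) l₂ ≤ lipR :=
      le_iSup_of_le l₁ (le_iSup_of_le l₂ (le_iSup_of_le hne le_rfl))
    calc decayNorm m (s - 1) (opSub (Q l₁) (Q l₂)) / edist (l₁ : Param d) l₂
        ≤ (ENNReal.ofReal c * decayNorm m (s' - 1) (opSub (R l₁) (R l₂)) +
            ENNReal.ofReal k * edist (l₁ : Param d) l₂ * decayNorm m s' (R l₂)) /
              edist (l₁ : Param d) l₂ := by
          rw [edist_dist, ← ENNReal.ofReal_mul hk]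
          exact ENNReal.div_le_div_right (hlip l₁ l₁.2 l₂ l₂.2) _
      _ = ENNReal.ofReal c * (decayNorm m (s' - 1) (opSub (R l₁) (R l₂)) /
            edist (l₁ : Param d) l₂) + ENNReal.ofReal k * decayNorm m s' (R l₂) := by
          rw [ENNReal.add_div, mul_div_assoc, mul_right_comm, ENNReal.mul_div_cancel_right he₀
            (edist_ne_top _ _)]
      _ ≤ ENNReal.ofReal c * lipR + ENNReal.ofReal k * supR := by
          gcongr; exact hR _ l₂.2
  calc lipDecay γ m s Λ Q
      ≤ ENNReal.ofReal c * supR +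
          ENNReal.ofReal γ * (ENNReal.ofReal c * lipR + ENNReal.ofReal k * supR) := by
        unfold lipDecay; gcongr
    _ = ENNReal.ofReal c * (supR + ENNReal.ofReal γ * lipR) +
          ENNReal.ofReal γ * ENNReal.ofReal k * supR := by ring
    _ ≤ ENNReal.ofReal c * (supR + ENNReal.ofReal γ * lipR) +
          ENNReal.ofReal γ * ENNReal.ofReal k * (supR + ENNReal.ofReal γ * lipR) := by
        gcongr; exact le_self_add
    _ = ENNReal.ofReal (c + γ * k) * lipDecay γ m s' Λ R := by
        rw [ENNReal.ofReal_add hc (mul_nonneg hγ hk), ENNReal.ofReal_mul hγ, lipDecay]; ring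

theorem homological_equation_diophantine_general (d : ℕ)
    (m s τ : ℝ) (hτ : 0 < τ) :
    ∃ C : ℝ, 0 < C ∧
      ∀ (γ : ℝ), 0 < γ → γ ≤ 1 → ∀ (Λ : Set (Param d)) (R : Param d → OpCoef d),
        lipDecay γ m (s + 2 * τ + 1) (dioSet Λ γ τ) R ≠ ⊤ →
        (∀ lam ∈ dioSet Λ γ τ, ∀ (ℓ : Zd d) (j j' : Z2),
          (¬(ℓ = 0 ∧ j = j') →
            Complex.I * cR (dotP lam.1 ℓ + dotP lam.2 (j - j')) * hPsi lam (R lam) ℓ j j'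
              + R lam ℓ j j' = 0) ∧
          hPsi lam (R lam) 0 j j = 0) ∧
        lipDecay γ m s (dioSet Λ γ τ) (fun lam => hPsi lam (R lam)) ≤
          ENNReal.ofReal (C / γ) * lipDecay γ m (s + 2 * τ + 1) (dioSet Λ γ τ) R ∧
        (∀ lam ∈ dioSet Λ γ τ,
          (∀ (ℓ : Zd d) (j' : Z2), j' ≠ 0 → R lam ℓ 0 j' = 0) →
          ∀ (ℓ : Zd d) (j' : Z2), j' ≠ 0 → hPsi lam (R lam) ℓ 0 j' = 0) := by
  refine ⟨2 ^ τ * (1 + (d + 2) * 2 ^ τ), by positivity, fun γ hγ _ Λ R _ => ⟨?_, ?_, ?_⟩⟩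
  · exact fun lam hlam ℓ j j' =>
      ⟨I_mul_smallDivisor_mul_hPsi_add hγ hτ.le hlam (R lam), if_pos ⟨rfl, rfl⟩⟩
  · have hC : 2 ^ τ * (1 + (d + 2) * 2 ^ τ) / γ = 2 ^ τ / γ + γ * ((d + 2) * (2 ^ τ / γ) ^ 2) := by
      field_simp
    rw [hC]
    refine lipDecay_le_of_decayNorm_le hγ.le (by positivity) (by positivity)
      (fun lam hlam => ?_) (fun l₁ hl₁ l₂ hl₂ => ?_)
    · simpa using decayNorm_le_of_norm_le (t := τ) (b := 0) (B := R lam) (u := 0)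
        (by positivity) le_rfl m (s₁ := s + 2 * τ + 1) (by linarith) le_rfl
        (fun ℓ j j' => by simpa using norm_hPsi_le hγ hτ.le hlam (R lam) ℓ j j')
    · exact decayNorm_le_of_norm_le (by positivity) (by positivity) m (by linarith) (by linarith)
        (norm_hPsi_sub_hPsi_le hγ hτ.le hl₁ hl₂ _ _)
  · intro lam _ hR ℓ j' hj'
    rw [hPsi_of_offDiag _ fun h => hj' h.2.symm, hR ℓ j' hj', neg_zero, zero_div]

/-- **Homological equation with Diophantine frequencies.** For a Lipschitz
family `R ∈ OPM^m_{s+2τ+1}`, the operator `Ψ` defined above solves, for every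
`λ ∈ Λ(γ,τ)`, the homological equation `ω·∂_φ Ψ + [ζ·∇, Ψ] + R = D_R` (equivalently
`i(ω·ℓ + ζ·(j−j'))Ψ̂(ℓ)_j^{j'} + R̂(ℓ)_j^{j'} = 0` off the diagonal, with `Ψ̂(0)_j^j = 0`),
belongs to `OPM^m_s` with `|Ψ|_{m,s}^{Lip(γ)} ≤ Cγ^{−1}|R|_{m,s+2τ+1}^{Lip(γ)}`, and it
preserves the space of zero-average functions whenever `R` does. -/
theorem homological_equation_diophantine (d : ℕ) (hd : 0 < d)
    (m s τ : ℝ) (hs : s0 d ≤ s) (hτ : 0 < τ) :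
    ∃ C : ℝ, 0 < C ∧
      ∀ (γ : ℝ), 0 < γ → γ ≤ 1 → ∀ (Λ : Set (Param d)) (R : Param d → OpCoef d),
        lipDecay γ m (s + 2 * τ + 1) (dioSet Λ γ τ) R ≠ ⊤ →
        (∀ lam ∈ dioSet Λ γ τ, ∀ (ℓ : Zd d) (j j' : Z2),
          (¬(ℓ = 0 ∧ j = j') →
            Complex.I * cR (dotP lam.1 ℓ + dotP lam.2 (j - j')) * hPsi lam (R lam) ℓ j j'
              + R lam ℓ j j' = 0) ∧
          hPsi lam (R lam) 0 j j = 0) ∧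
        lipDecay γ m s (dioSet Λ γ τ) (fun lam => hPsi lam (R lam)) ≤
          ENNReal.ofReal (C / γ) * lipDecay γ m (s + 2 * τ + 1) (dioSet Λ γ τ) R ∧
        (∀ lam ∈ dioSet Λ γ τ,
          (∀ (ℓ : Zd d) (j' : Z2), j' ≠ 0 → R lam ℓ 0 j' = 0) →
          ∀ (ℓ : Zd d) (j' : Z2), j' ≠ 0 → hPsi lam (R lam) ℓ 0 j' = 0) :=
  homological_equation_diophantine_general d m s τ hτ
end
end

section
/- (Homological equation in the KAM reducibility step) Let γ ∈ (0,1), τ > 0, N > 0, let M be an integer with M > 4τ, and let s ≥ s₀. Let ζ ∈ ℝ², ω ∈ ℝ^d, and μ(j) = i ζ·j + q(j) with q(j) purely imaginary for every j ∈ ℤ²∖{0}, and assume the second Melnikov conditions: |i ω·ℓ + μ(j) − μ(j')| ≥ γ/(⟨ℓ⟩^τ |j|^τ |j'|^τ) for all ℓ ∈ ℤ^d, j,j' ∈ ℤ²∖{0} with (ℓ,j,j') ≠ (0,j,j) and |ℓ|, |j−j'| ≤ N. Let R be an operator with |R|_{−M,s} < ∞, and define Ψ by Ψ̂(ℓ)_j^{j'}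 := −R̂(ℓ)_j^{j'}/(i ω·ℓ + μ(j) − μ(j')) for (ℓ,j,j') ≠ (0,j,j) with |ℓ|,|j−j'| ≤ N, and Ψ̂(ℓ)_j^{j'} := 0 otherwise. Then Ψ solves ω·∂_φ Ψ + [D, Ψ] + Π_N R = D_R, where D := diag_{j∈ℤ²∖{0}} μ(j), and satisfies |Ψ|_{0,s} ≤ C(s,τ) N^{2τ} γ^{−1} |R|_{−M,s} and |Ψ|_{0,s+M} ≤ C(s,τ) N^{2τ+M} γ^{−1} |R|_{−M,s}. -/
open scoped BigOperators ENNReal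
open MeasureTheory Filter

noncomputable section

/-- The (purely imaginary) diagonal eigenvalues `μ(j) = iζ·j + q(j)`. -/
def muF (ζ : Fin 2 → ℝ) (q : Z2 → ℂ) (j : Z2) : ℂ := Complex.I * cR (dotP ζ j) + q j

/-- The solution `Ψ` of the homological equation of the KAM reducibility step:
`Ψ̂(ℓ)_j^{j'} = −R̂(ℓ)_j^{j'}/(iω·ℓ + μ(j) − μ(j'))` for `(ℓ,j,j') ≠ (0,j,j)` with
`|ℓ|, |j−j'| ≤ N`, and `0` otherwise. -/
def kamPsi {d : ℕ} (N : ℝ) (ω : Fin d → ℝ) (ζ : Fin 2 → ℝ) (q : Z2 → ℂ)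
    (R : OpCoef d) : OpCoef d :=
  fun ℓ j j' =>
    if (¬(ℓ = 0 ∧ j = j')) ∧ lnorm ℓ ≤ N ∧ jnorm (j - j') ≤ N then
      - R ℓ j j' / (Complex.I * cR (dotP ω ℓ) + muF ζ q j - muF ζ q j')
    else 0

/-!
`Ψ` is obtained by dividing `R` by the small divisors `iω·ℓ + μ(j) − μ(j')`, so the homological
equation holds coefficient by coefficient. On the support of `Ψ` one has `⟨ℓ⟩ ≤ N` and
`|j| ≤ |j'| + N ≤ 2N⟨j'⟩`, so the Melnikov weight `⟨ℓ⟩^τ |j|^τ |j'|^τ` is at most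
`2^τ N^{2τ} ⟨j'⟩^{2τ} ≤ 2^τ N^{2τ} ⟨j'⟩^M`: the loss in `j'` is absorbed by the decay norm of
order `−M`. For the second estimate, `⟨ℓ, j − j'⟩^M ≤ N^M` on the support as well.
-/

section

variable {d : ℕ}

lemma lnorm_zero : lnorm (0 : Zd d) = 0 := by simp [lnorm]

lemma one_le_lnorm {ℓ : Zd d} (h : ℓ ≠ 0) : 1 ≤ lnorm ℓ := by
  obtain ⟨i, hi⟩ := Function.ne_iff.mp h
  have hsq : (1 : ℝ) ≤ (ℓ i : ℝ) ^ 2 := by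
    rw [← sq_abs, ← Int.cast_abs]
    exact one_le_pow₀ (by exact_mod_cast Int.one_le_abs hi)
  exact Real.one_le_sqrt.mpr <| hsq.trans <|
    Finset.single_le_sum (fun k _ => sq_nonneg (ℓ k : ℝ)) (Finset.mem_univ i)

lemma lnorm_eq_norm (ℓ : Zd d) :
    lnorm ℓ = ‖(WithLp.toLp 2 (fun i => (ℓ i : ℝ)) : EuclideanSpace ℝ (Fin d))‖ := by
  simp [lnorm, EuclideanSpace.norm_eq]

lemma lnorm_add_le (ℓ ℓ' : Zd d) : lnorm (ℓ + ℓ') ≤ lnorm ℓ + lnorm ℓ' := by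
  have h := norm_add_le (WithLp.toLp 2 (fun i => (ℓ i : ℝ)) : EuclideanSpace ℝ (Fin d))
    (WithLp.toLp 2 (fun i => (ℓ' i : ℝ)))
  rw [← WithLp.toLp_add] at h
  simp only [lnorm_eq_norm, Pi.add_apply, Int.cast_add]
  exact h

lemma jnorm_eq_lnorm (j : Z2) : jnorm j = lnorm j := by
  simp [jnorm, lnorm, Fin.sum_univ_two]

lemma jnorm_le_add_jnorm_sub (j j' : Z2) : jnorm j ≤ jnorm j' + jnorm (j - j') := by
  simpa only [jnorm_eq_lnorm, add_sub_cancel] using lnorm_add_le j' (j - j')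

lemma jnorm_nonneg (j : Z2) : 0 ≤ jnorm j := Real.sqrt_nonneg _

lemma one_le_jwt (j : Z2) : 1 ≤ jwt j := le_max_left _ _

lemma one_le_of_offDiag {ℓ : Zd d} {j j' : Z2} {N : ℝ} (hdiag : ¬(ℓ = 0 ∧ j = j'))
    (hℓ : lnorm ℓ ≤ N) (hj : jnorm (j - j') ≤ N) : 1 ≤ N := by
  by_cases hℓ0 : ℓ = 0
  · have hjj' : j - j' ≠ 0 := sub_ne_zero.mpr fun h => hdiag ⟨hℓ0, h⟩
    rw [jnorm_eq_lnorm] at hj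
    exact (one_le_lnorm hjj').trans hj
  · exact (one_le_lnorm hℓ0).trans hℓ

lemma smallDivisor_weight_le {ℓ : Zd d} {j j' : Z2} {N τ : ℝ} (hτ : 0 ≤ τ) (hN : 1 ≤ N)
    (hℓ : lnorm ℓ ≤ N) (hj : jnorm (j - j') ≤ N) :
    lwt ℓ ^ τ * jnorm j ^ τ * jnorm j' ^ τ ≤ 2 ^ τ * N ^ (2 * τ) * jwt j' ^ (2 * τ) := by
  have hjwt := one_le_jwt j'
  have hj'le : jnorm j' ≤ jwt j' := le_max_right _ _
  have hjle : jnorm j ≤ 2 * N * jwt j' := by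
    nlinarith [jnorm_le_add_jnorm_sub j j']
  have hlwt : 0 ≤ lwt ℓ := zero_le_one.trans (le_max_left _ _)
  have hprod : lwt ℓ * jnorm j * jnorm j' ≤ 2 * N ^ 2 * jwt j' ^ 2 :=
    calc lwt ℓ * jnorm j * jnorm j' ≤ N * (2 * N * jwt j') * jwt j' := by
          have := jnorm_nonneg j
          have := jnorm_nonneg j'
          have : lwt ℓ ≤ N := max_le hN hℓ
          gcongr
      _ = 2 * N ^ 2 * jwt j' ^ 2 := by ring
  have hpow {x : ℝ} (hx : 0 ≤ x) : x ^ (2 * τ) = (x ^ 2) ^ τ := by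
    exact_mod_cast Real.rpow_natCast_mul hx 2 τ
  calc lwt ℓ ^ τ * jnorm j ^ τ * jnorm j' ^ τ = (lwt ℓ * jnorm j * jnorm j') ^ τ := by
        rw [Real.mul_rpow (mul_nonneg hlwt (jnorm_nonneg _)) (jnorm_nonneg _),
          Real.mul_rpow hlwt (jnorm_nonneg _)]
    _ ≤ (2 * N ^ 2 * jwt j' ^ 2) ^ τ := by
        gcongr
        exact mul_nonneg (mul_nonneg hlwt (jnorm_nonneg _)) (jnorm_nonneg _)
    _ = 2 ^ τ * N ^ (2 * τ) * jwt j' ^ (2 * τ) := by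
        rw [hpow (by linarith), hpow (by linarith), Real.mul_rpow (by positivity) (by positivity),
          Real.mul_rpow (by positivity) (by positivity)]

lemma smallDivisor_weight_pos (ℓ : Zd d) {j j' : Z2} (τ : ℝ) (hj : j ≠ 0) (hj' : j' ≠ 0) :
    0 < lwt ℓ ^ τ * jnorm j ^ τ * jnorm j' ^ τ := by
  have hℓ : 0 < lwt ℓ := zero_lt_one.trans_le (le_max_left _ _)
  have hj : 0 < jnorm j := zero_lt_one.trans_le (by rw [jnorm_eq_lnorm]; exact one_le_lnorm hj)
  have hj' : 0 < jnorm j' := zero_lt_one.trans_le (by rw [jnorm_eq_lnorm]; exact one_le_lnorm hj')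
  positivity

lemma ENNReal.sq_rpow_one_half (x : ℝ≥0∞) : (x ^ 2) ^ ((1 : ℝ) / 2) = x := by
  simpa [one_div] using ENNReal.pow_rpow_inv_natCast two_ne_zero x

def decayColumn (m s : ℝ) (R : OpCoef d) (j' : Z2) : ℝ≥0∞ :=
  (∑' p : Freq d,
    ENNReal.ofReal (jwt j' ^ (-m) * wt p.1 (p.2 - j') ^ s * ‖R p.1 p.2 j'‖) ^ 2) ^ ((1 : ℝ) / 2)

lemma decayNorm_eq_iSup_decayColumn (m s : ℝ) (R : OpCoef d) :
    decayNorm m s R = ⨆ j', decayColumn m s R j' := by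
  refine iSup_congr fun j' => ?_
  have hjwt : 0 ≤ jwt j' ^ (-m) := Real.rpow_nonneg (zero_le_one.trans (one_le_jwt j')) _
  rw [decayColumn, ← ENNReal.sq_rpow_one_half (ENNReal.ofReal _),
    ← ENNReal.mul_rpow_of_nonneg _ _ (by norm_num), ← ENNReal.tsum_mul_left]
  congr 1
  refine tsum_congr fun p => ?_
  have hwt : 0 ≤ wt p.1 (p.2 - j') := zero_le_one.trans (one_le_wt _ _)
  rw [ENNReal.ofReal_mul (mul_nonneg hjwt (Real.rpow_nonneg hwt _)), ENNReal.ofReal_mul hjwt,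
    ofReal_norm, enorm_eq_nnnorm, mul_pow, mul_pow, ← ENNReal.ofReal_pow (Real.rpow_nonneg hwt _),
    ← Real.rpow_natCast, ← Real.rpow_mul hwt, mul_assoc]
  norm_num [mul_comm s]

lemma decayColumn_le_of_weighted_le {m s m' s' c : ℝ} (hc : 0 ≤ c) {Ψ R : OpCoef d} {j' : Z2}
    (h : ∀ (ℓ : Zd d) (j : Z2), jwt j' ^ (-m') * wt ℓ (j - j') ^ s' * ‖Ψ ℓ j j'‖ ≤
      c * (jwt j' ^ (-m) * wt ℓ (j - j') ^ s * ‖R ℓ j j'‖)) :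
    decayColumn m' s' Ψ j' ≤ ENNReal.ofReal c * decayColumn m s R j' := by
  rw [decayColumn, decayColumn, ← ENNReal.sq_rpow_one_half (ENNReal.ofReal c),
    ← ENNReal.mul_rpow_of_nonneg _ _ (by norm_num), ← ENNReal.tsum_mul_left]
  refine ENNReal.rpow_le_rpow (ENNReal.tsum_le_tsum fun p => ?_) (by norm_num)
  rw [← mul_pow, ← ENNReal.ofReal_mul hc]
  gcongr ENNReal.ofReal ?_ ^ 2
  exact h p.1 p.2

lemma decayNorm_le_of_weighted_le {m s m' s' c : ℝ} (hc : 0 ≤ c) {Ψ R : OpCoef d}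
    (h : ∀ (ℓ : Zd d) (j j' : Z2), jwt j' ^ (-m') * wt ℓ (j - j') ^ s' * ‖Ψ ℓ j j'‖ ≤
      c * (jwt j' ^ (-m) * wt ℓ (j - j') ^ s * ‖R ℓ j j'‖)) :
    decayNorm m' s' Ψ ≤ ENNReal.ofReal c * decayNorm m s R := by
  rw [decayNorm_eq_iSup_decayColumn, decayNorm_eq_iSup_decayColumn, ENNReal.mul_iSup]
  exact iSup_mono fun j' => decayColumn_le_of_weighted_le hc (h · · j')

def SecondMelnikov (γ τ N : ℝ) (ω : Fin d → ℝ) (ζ : Fin 2 → ℝ) (q : Z2 → ℂ) : Prop :=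
  ∀ (ℓ : Zd d) (j j' : Z2), j ≠ 0 → j' ≠ 0 → ¬(ℓ = 0 ∧ j = j') →
    lnorm ℓ ≤ N → jnorm (j - j') ≤ N →
    γ / (lwt ℓ ^ τ * jnorm j ^ τ * jnorm j' ^ τ) ≤
      ‖Complex.I * cR (dotP ω ℓ) + muF ζ q j - muF ζ q j'‖

variable {γ τ N : ℝ} {ω : Fin d → ℝ} {ζ : Fin 2 → ℝ} {q : Z2 → ℂ}

lemma SecondMelnikov.smallDivisor_ne_zero (hmel : SecondMelnikov γ τ N ω ζ q) (hγ : 0 < γ)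
    {ℓ : Zd d} {j j' : Z2} (hj : j ≠ 0) (hj' : j' ≠ 0) (hdiag : ¬(ℓ = 0 ∧ j = j'))
    (hℓ : lnorm ℓ ≤ N) (hjj' : jnorm (j - j') ≤ N) :
    Complex.I * cR (dotP ω ℓ) + muF ζ q j - muF ζ q j' ≠ 0 :=
  norm_pos_iff.mp <| (div_pos hγ (smallDivisor_weight_pos ℓ τ hj hj')).trans_le <|
    hmel ℓ j j' hj hj' hdiag hℓ hjj'

lemma kamPsi_homological_eq (hmel : SecondMelnikov γ τ N ω ζ q) (hγ : 0 < γ) (hN : 0 ≤ N)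
    (R : OpCoef d) {ℓ : Zd d} {j j' : Z2} (hj : j ≠ 0) (hj' : j' ≠ 0) :
    (Complex.I * cR (dotP ω ℓ) + muF ζ q j - muF ζ q j') * kamPsi N ω ζ q R ℓ j j'
      + truncOp N R ℓ j j' = diagPart R ℓ j j' := by
  by_cases hdiag : ℓ = 0 ∧ j = j'
  · obtain ⟨rfl, rfl⟩ := hdiag
    simp [kamPsi, truncOp, diagPart, lnorm_zero, jnorm_eq_lnorm, hN]
  by_cases htrunc : lnorm ℓ ≤ N ∧ jnorm (j - j') ≤ N
  · have hδ := hmel.smallDivisor_ne_zero hγ hj hj' hdiag htrunc.1 htrunc.2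
    simp only [kamPsi, truncOp, diagPart, if_pos (And.intro hdiag htrunc), if_pos htrunc,
      if_neg hdiag]
    field_simp
    ring
  · simp [kamPsi, truncOp, diagPart, hdiag, htrunc]

lemma norm_kamPsi_le (hmel : SecondMelnikov γ τ N ω ζ q) (hγ : 0 < γ) (hτ : 0 ≤ τ) (hN : 0 ≤ N)
    {R : OpCoef d} (hR0 : ∀ (ℓ : Zd d) (j j' : Z2), j = 0 ∨ j' = 0 → R ℓ j j' = 0)
    (ℓ : Zd d) (j j' : Z2) :
    ‖kamPsi N ω ζ q R ℓ j j'‖ ≤ 2 ^ τ * N ^ (2 * τ) / γ * jwt j' ^ (2 * τ) * ‖R ℓ j j'‖ := by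
  unfold kamPsi
  split_ifs with hsupp
  · obtain ⟨hdiag, hℓ, hjj'⟩ := hsupp
    by_cases hj0 : j = 0 ∨ j' = 0
    · simp [hR0 ℓ j j' hj0]
    obtain ⟨hj, hj'⟩ := not_or.mp hj0
    have hD := smallDivisor_weight_pos ℓ τ hj hj'
    rw [norm_div, norm_neg]
    calc ‖R ℓ j j'‖ / ‖Complex.I * cR (dotP ω ℓ) + muF ζ q j - muF ζ q j'‖
        ≤ ‖R ℓ j j'‖ / (γ / (lwt ℓ ^ τ * jnorm j ^ τ * jnorm j' ^ τ)) :=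
          div_le_div_of_nonneg_left (norm_nonneg _) (div_pos hγ hD)
            (hmel ℓ j j' hj hj' hdiag hℓ hjj')
      _ = (lwt ℓ ^ τ * jnorm j ^ τ * jnorm j' ^ τ) / γ * ‖R ℓ j j'‖ := by
          field_simp
      _ ≤ 2 ^ τ * N ^ (2 * τ) * jwt j' ^ (2 * τ) / γ * ‖R ℓ j j'‖ := by
          gcongr ?_ / _ * _
          exact smallDivisor_weight_le hτ (one_le_of_offDiag hdiag hℓ hjj') hℓ hjj'
      _ = 2 ^ τ * N ^ (2 * τ) / γ * jwt j' ^ (2 * τ) * ‖R ℓ j j'‖ := by ring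
  · have := zero_le_one.trans (one_le_jwt j')
    rw [norm_zero]
    positivity

lemma wt_rpow_mul_norm_kamPsi_le {t : ℝ} (ht : 0 ≤ t) (R : OpCoef d) (ℓ : Zd d) (j j' : Z2) :
    wt ℓ (j - j') ^ t * ‖kamPsi N ω ζ q R ℓ j j'‖ ≤ N ^ t * ‖kamPsi N ω ζ q R ℓ j j'‖ := by
  by_cases hsupp : ¬(ℓ = 0 ∧ j = j') ∧ lnorm ℓ ≤ N ∧ jnorm (j - j') ≤ N
  · obtain ⟨hdiag, hℓ, hjj'⟩ := hsupp
    have hwt : wt ℓ (j - j') ≤ N := max_le (one_le_of_offDiag hdiag hℓ hjj') (max_le hℓ hjj')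
    have := zero_le_one.trans (one_le_wt ℓ (j - j'))
    gcongr
  · simp only [kamPsi, if_neg hsupp, norm_zero, mul_zero, le_refl]

lemma kamPsi_decayNorm_le (hmel : SecondMelnikov γ τ N ω ζ q) (hγ : 0 < γ) (hτ : 0 ≤ τ)
    (hN : 0 < N) {M s t : ℝ} (hτM : 2 * τ ≤ M) (ht : 0 ≤ t) {R : OpCoef d}
    (hR0 : ∀ (ℓ : Zd d) (j j' : Z2), j = 0 ∨ j' = 0 → R ℓ j j' = 0) :
    decayNorm 0 (s + t) (kamPsi N ω ζ q R) ≤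
      ENNReal.ofReal (2 ^ τ * N ^ (2 * τ + t) / γ) * decayNorm (-M) s R := by
  refine decayNorm_le_of_weighted_le (by positivity) fun ℓ j j' => ?_
  have hwt : 0 < wt ℓ (j - j') := zero_lt_one.trans_le (one_le_wt _ _)
  calc jwt j' ^ (-0 : ℝ) * wt ℓ (j - j') ^ (s + t) * ‖kamPsi N ω ζ q R ℓ j j'‖
      = wt ℓ (j - j') ^ s * (wt ℓ (j - j') ^ t * ‖kamPsi N ω ζ q R ℓ j j'‖) := by
        rw [neg_zero, Real.rpow_zero, Real.rpow_add hwt]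
        ring
    _ ≤ wt ℓ (j - j') ^ s *
          (N ^ t * (2 ^ τ * N ^ (2 * τ) / γ * jwt j' ^ (2 * τ) * ‖R ℓ j j'‖)) := by
        gcongr _ * ?_
        refine (wt_rpow_mul_norm_kamPsi_le ht R ℓ j j').trans ?_
        gcongr
        exact norm_kamPsi_le hmel hγ hτ hN.le hR0 ℓ j j'
    _ ≤ wt ℓ (j - j') ^ s * (N ^ t * (2 ^ τ * N ^ (2 * τ) / γ * jwt j' ^ M * ‖R ℓ j j'‖)) := by
        gcongr _ * (_ * (_ * ?_ * _))
        exact Real.rpow_le_rpow_of_exponent_le (one_le_jwt j') hτM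
    _ = 2 ^ τ * N ^ (2 * τ + t) / γ * (jwt j' ^ (-(-M)) * wt ℓ (j - j') ^ s * ‖R ℓ j j'‖) := by
        rw [neg_neg, Real.rpow_add hN]
        ring

end

theorem kam_homological_equation_general (d : ℕ) (τ s : ℝ) (M : ℕ)
    (hτ : 0 < τ) (hM : 4 * τ < (M : ℝ)) :
    ∃ C : ℝ, 0 < C ∧
      ∀ (γ N : ℝ), 0 < γ → γ < 1 → 0 < N →
      ∀ (ω : Fin d → ℝ) (ζ : Fin 2 → ℝ) (q : Z2 → ℂ),
        (∀ j : Z2, j ≠ 0 → (q j).re = 0) →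
        (∀ (ℓ : Zd d) (j j' : Z2), j ≠ 0 → j' ≠ 0 → ¬(ℓ = 0 ∧ j = j') →
          lnorm ℓ ≤ N → jnorm (j - j') ≤ N →
          γ / (lwt ℓ ^ τ * jnorm j ^ τ * jnorm j' ^ τ) ≤
            ‖Complex.I * cR (dotP ω ℓ) + muF ζ q j - muF ζ q j'‖) →
        ∀ R : OpCoef d,
          (∀ (ℓ : Zd d) (j j' : Z2), j = 0 ∨ j' = 0 → R ℓ j j' = 0) →
          decayNorm (-(M : ℝ)) s R ≠ ⊤ →
          (∀ (ℓ : Zd d) (j j' : Z2), j ≠ 0 → j' ≠ 0 →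
            (Complex.I * cR (dotP ω ℓ) + muF ζ q j - muF ζ q j') * kamPsi N ω ζ q R ℓ j j'
              + truncOp N R ℓ j j' = diagPart R ℓ j j') ∧
          decayNorm 0 s (kamPsi N ω ζ q R) ≤
            ENNReal.ofReal (C * N ^ (2 * τ) / γ) * decayNorm (-(M : ℝ)) s R ∧
          decayNorm 0 (s + (M : ℝ)) (kamPsi N ω ζ q R) ≤
            ENNReal.ofReal (C * N ^ (2 * τ + (M : ℝ)) / γ) * decayNorm (-(M : ℝ)) s R := by
  refine ⟨2 ^ τ, by positivity, fun γ N hγ _ hN ω ζ q _ hmel R hR0 _ => ?_⟩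
  have hτM : 2 * τ ≤ (M : ℝ) := by linarith
  refine ⟨fun ℓ j j' hj hj' => kamPsi_homological_eq hmel hγ hN.le R hj hj', ?_, ?_⟩
  · simpa using kamPsi_decayNorm_le (s := s) hmel hγ hτ.le hN hτM le_rfl hR0
  · exact kamPsi_decayNorm_le hmel hγ hτ.le hN hτM (Nat.cast_nonneg M) hR0

/-- **Homological equation in the KAM reducibility step.** Under the
second Melnikov conditions on the purely imaginary eigenvalues `μ(j) = iζ·j + q(j)`
(truncated at `|ℓ|, |j−j'| ≤ N`), for any operator `R` (acting on zero-average functions)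
with `|R|_{−M,s} < ∞`, the operator `Ψ` above solves
`ω·∂_φ Ψ + [D,Ψ] + Π_N R = D_R` with `D = diag μ(j)`, and satisfies
`|Ψ|_{0,s} ≤ C(s,τ) N^{2τ} γ^{−1} |R|_{−M,s}` and
`|Ψ|_{0,s+M} ≤ C(s,τ) N^{2τ+M} γ^{−1} |R|_{−M,s}`. -/
theorem kam_homological_equation (d : ℕ) (hd : 0 < d) (τ s : ℝ) (M : ℕ)
    (hτ : 0 < τ) (hM : 4 * τ < (M : ℝ)) (hs : s0 d ≤ s) :
    ∃ C : ℝ, 0 < C ∧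
      ∀ (γ N : ℝ), 0 < γ → γ < 1 → 0 < N →
      ∀ (ω : Fin d → ℝ) (ζ : Fin 2 → ℝ) (q : Z2 → ℂ),
        (∀ j : Z2, j ≠ 0 → (q j).re = 0) →
        (∀ (ℓ : Zd d) (j j' : Z2), j ≠ 0 → j' ≠ 0 → ¬(ℓ = 0 ∧ j = j') →
          lnorm ℓ ≤ N → jnorm (j - j') ≤ N →
          γ / (lwt ℓ ^ τ * jnorm j ^ τ * jnorm j' ^ τ) ≤
            ‖Complex.I * cR (dotP ω ℓ) + muF ζ q j - muF ζ q j'‖) →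
        ∀ R : OpCoef d,
          (∀ (ℓ : Zd d) (j j' : Z2), j = 0 ∨ j' = 0 → R ℓ j j' = 0) →
          decayNorm (-(M : ℝ)) s R ≠ ⊤ →
          (∀ (ℓ : Zd d) (j j' : Z2), j ≠ 0 → j' ≠ 0 →
            (Complex.I * cR (dotP ω ℓ) + muF ζ q j - muF ζ q j') * kamPsi N ω ζ q R ℓ j j'
              + truncOp N R ℓ j j' = diagPart R ℓ j j') ∧
          decayNorm 0 s (kamPsi N ω ζ q R) ≤
            ENNReal.ofReal (C * N ^ (2 * τ) / γ) * decayNorm (-(M : ℝ)) s R ∧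
          decayNorm 0 (s + (M : ℝ)) (kamPsi N ω ζ q R) ≤
            ENNReal.ofReal (C * N ^ (2 * τ + (M : ℝ)) / γ) * decayNorm (-(M : ℝ)) s R :=
  kam_homological_equation_general d τ s M hτ hM

end
end

section
/- (Measure of a resonant set) Let n ≥ 1, let Ω ⊂ ℝ^n be a bounded measurable set, let k ∈ ℤ^n∖{0}, let δ > 0, and let r : ℝ^n → ℝ be a Lipschitz function with Lipschitz constant at most |k|/2. Then the Lebesgue measure of the set { λ ∈ Ω : |λ·k + r(λ)| < δ } is at most C(Ω) δ / |k|, for a constant C(Ω) depending only on Ω. -/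
open scoped BigOperators ENNReal
open MeasureTheory Filter

noncomputable section

/-!
Slice the parameter space by lines parallel to `k`. Along each such line `λ·k + r(λ)` grows at
rate at least `|k| - |k|/2 = |k|/2`, so it is `δ`-small only on an interval of length
`≤ 4δ/|k|`. After rotating `k/|k|` onto the first coordinate axis, Fubini integrates this bound
over the bounded transversal directions.
-/

open Metric

theorem LinearIsometryEquiv.exists_apply_eq_of_norm_eq {F : Type*} [NormedAddCommGroup F]
    [InnerProductSpace ℝ F] {v w : F} (h : ‖v‖ = ‖w‖) : ∃ T : F ≃ₗᵢ[ℝ] F, T v = w :=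
  ⟨_, Submodule.reflection_sub h⟩

theorem Fin.insertNth_zero_eq_add_smul_single {R : Type*} [Semiring R] {n : ℕ} (t : R)
    (y : Fin n → R) :
    (Fin.insertNth 0 t y : Fin (n + 1) → R) = Fin.insertNth 0 0 y + t • Pi.single 0 1 := by
  ext i
  refine Fin.cases ?_ (fun j => ?_) i <;> simp

theorem EuclideanSpace.measurePreserving_toLp_insertNth_zero (n : ℕ) :
    MeasurePreserving (fun p : ℝ × (Fin n → ℝ) =>
      WithLp.toLp 2 (Fin.insertNth 0 p.1 p.2 : Fin (n + 1) → ℝ)) :=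
  (PiLp.volume_preserving_toLp (Fin (n + 1))).comp
    (measurePreserving_piFinSuccAbove (fun _ => (volume : Measure ℝ)) 0).symm

theorem EuclideanSpace.volume_le_of_lineSection_le {n : ℕ} {u : EuclideanSpace ℝ (Fin (n + 1))}
    (hu : ‖u‖ = 1) {S : Set (EuclideanSpace ℝ (Fin (n + 1)))} (hS : MeasurableSet S) {R : ℝ}
    (hSR : S ⊆ closedBall 0 R) {ε : ℝ≥0∞} (hε : ∀ x, volume {t : ℝ | x + t • u ∈ S} ≤ ε) :
    volume S ≤ ε * ENNReal.ofReal (2 * R) ^ n := by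
  obtain ⟨T, hT⟩ := LinearIsometryEquiv.exists_apply_eq_of_norm_eq
    (v := EuclideanSpace.single 0 1) (w := u) (by simp [hu])
  set g : ℝ × (Fin n → ℝ) → EuclideanSpace ℝ (Fin (n + 1)) :=
    fun p => T (WithLp.toLp 2 (Fin.insertNth 0 p.1 p.2))
  have hg : MeasurePreserving g :=
    T.measurePreserving.comp (EuclideanSpace.measurePreserving_toLp_insertNth_zero n)
  have hg_line : ∀ t y, g (t, y) = T (WithLp.toLp 2 (Fin.insertNth 0 0 y)) + t • u := by
    intro t y
    simp only [g, Fin.insertNth_zero_eq_add_smul_single t y, WithLp.toLp_add, WithLp.toLp_smul,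
      map_add, map_smul, ← hT]
    rfl
  set B : Set (Fin n → ℝ) := Set.univ.pi fun _ => Set.Icc (-R) R
  have hg_box : ∀ t y, g (t, y) ∈ S → y ∈ B := by
    intro t y hty j _
    have hj := (PiLp.norm_apply_le (WithLp.toLp 2 (Fin.insertNth 0 t y : Fin (n + 1) → ℝ))
      j.succ).trans ((T.norm_map _).symm.trans_le (mem_closedBall_zero_iff.1 (hSR hty)))
    simpa [abs_le] using hj
  have hsection : ∀ y, volume {t : ℝ | g (t, y) ∈ S} ≤ B.indicator (fun _ => ε) y := by
    intro y
    by_cases hy : y ∈ B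
    · simpa [Set.indicator_of_mem hy, hg_line] using hε (T (WithLp.toLp 2 (Fin.insertNth 0 0 y)))
    · have : {t : ℝ | g (t, y) ∈ S} = ∅ :=
        Set.eq_empty_of_forall_notMem fun t ht => hy (hg_box t y ht)
      simp [this]
  calc volume S = volume (g ⁻¹' S) := (hg.measure_preimage hS.nullMeasurableSet).symm
    _ = ∫⁻ y, volume {t : ℝ | g (t, y) ∈ S} := by
      rw [Measure.volume_eq_prod, Measure.prod_apply_symm (hg.measurable hS)]; rfl
    _ ≤ ∫⁻ y, B.indicator (fun _ => ε) y := lintegral_mono hsection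
    _ = ε * ENNReal.ofReal (2 * R) ^ n := by
      rw [lintegral_indicator_const (MeasurableSet.univ_pi fun _ => measurableSet_Icc),
        volume_pi_pi]
      simp [Real.volume_Icc, two_mul]

theorem volume_lineSection_abs_inner_add_lt_le {F : Type*} [NormedAddCommGroup F]
    [InnerProductSpace ℝ F] {v : F} (hv : v ≠ 0) {f : F → ℝ} (hf : LipschitzWith (‖v‖₊ / 2) f)
    (x : F) (δ : ℝ) :
    volume {t : ℝ | |inner ℝ (x + t • (‖v‖⁻¹ • v)) v + f (x + t • (‖v‖⁻¹ • v))| < δ} ≤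
      ENNReal.ofReal (4 * δ / ‖v‖) := by
  have hv' : 0 < ‖v‖ := norm_pos_iff.2 hv
  set u := ‖v‖⁻¹ • v
  have hu : ‖u‖ = 1 := by rw [norm_smul, norm_inv, norm_norm, inv_mul_cancel₀ hv'.ne']
  have hinner : ∀ t : ℝ, inner ℝ (x + t • u) v = inner ℝ x v + t * ‖v‖ := by
    intro t
    rw [inner_add_left, real_inner_smul_left, real_inner_smul_left, real_inner_self_eq_norm_sq]
    field_simp
  have hlip : ∀ s t : ℝ, |f (x + s • u) - f (x + t • u)| ≤ ‖v‖ / 2 * |s - t| := by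
    intro s t
    have := hf.dist_le_mul (x + s • u) (x + t • u)
    rwa [dist_add_left, dist_eq_norm (s • u), ← sub_smul, norm_smul, hu, mul_one, NNReal.coe_div,
      coe_nnnorm, Real.dist_eq, Real.norm_eq_abs] at this
  set φ : ℝ → ℝ := fun t => inner ℝ (x + t • u) v + f (x + t • u)
  have hφ : ∀ s t, ‖v‖ / 2 * |s - t| ≤ |φ s - φ t| := by
    intro s t
    calc ‖v‖ / 2 * |s - t|
        ≤ |(s - t) * ‖v‖| - |f (x + t • u) - f (x + s • u)| := by
          rw [abs_mul, abs_of_pos hv', abs_sub_comm (f (x + t • u))]; linarith [hlip s t]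
      _ ≤ |(s - t) * ‖v‖ - (f (x + t • u) - f (x + s • u))| := abs_sub_abs_le_abs_sub _ _
      _ = |φ s - φ t| := by simp only [φ, hinner]; ring_nf
  calc volume {t : ℝ | |φ t| < δ} ≤ ediam {t : ℝ | |φ t| < δ} := Real.volume_le_diam _
    _ ≤ ENNReal.ofReal (4 * δ / ‖v‖) := by
      refine ediam_le_of_forall_dist_le fun s hs t ht => ?_
      rw [Real.dist_eq, le_div_iff₀ hv']
      have hst : |φ s - φ t| < 2 * δ := (abs_sub _ _).trans_lt (by linarith [hs.out, ht.out])
      linarith [hφ s t]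

theorem EuclideanSpace.volume_abs_inner_add_lt_le {n : ℕ} {v : EuclideanSpace ℝ (Fin (n + 1))}
    (hv : v ≠ 0) {f : EuclideanSpace ℝ (Fin (n + 1)) → ℝ} (hf : LipschitzWith (‖v‖₊ / 2) f)
    (R δ : ℝ) :
    volume {x ∈ closedBall 0 R | |inner ℝ x v + f x| < δ} ≤
      ENNReal.ofReal (4 * δ / ‖v‖) * ENNReal.ofReal (2 * R) ^ n := by
  have hmeas : Measurable fun x => |inner ℝ x v + f x| :=
    ((continuous_id.inner continuous_const).add hf.continuous).abs.measurable
  refine volume_le_of_lineSection_le (norm_smul_inv_norm (𝕜 := ℝ) hv)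
    (measurableSet_closedBall.inter (measurableSet_lt hmeas measurable_const))
    (Set.sep_subset _ _) fun x => ?_
  exact (measure_mono fun t ht => ht.2).trans (volume_lineSection_abs_inner_add_lt_le hv hf x δ)

theorem resonant_set_measure_general (n : ℕ) (Ω : Set (Fin n → ℝ))
    (hΩb : Bornology.IsBounded Ω) :
    ∃ C : ℝ, 0 < C ∧
      ∀ (k : Fin n → ℤ), k ≠ 0 → ∀ δ : ℝ, 0 < δ →
        ∀ r : (Fin n → ℝ) → ℝ,
          (∀ x y : Fin n → ℝ,
            |r x - r y| ≤ Real.sqrt (∑ i, ((k i : ℝ)) ^ 2) / 2 *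
              Real.sqrt (∑ i, (x i - y i) ^ 2)) →
          volume {lam : Fin n → ℝ | lam ∈ Ω ∧
              |(∑ i, lam i * (k i : ℝ)) + r lam| < δ} ≤
            ENNReal.ofReal (C * δ / Real.sqrt (∑ i, ((k i : ℝ)) ^ 2)) := by
  rcases n with _ | n
  · exact ⟨1, one_pos, fun k hk => absurd (Subsingleton.elim k 0) hk⟩
  obtain ⟨R, hR, hΩR⟩ :=
    ((PiLp.antilipschitzWith_ofLp 2 _).isBounded_preimage hΩb).subset_closedBall_lt 0 0
  refine ⟨4 * (2 * R) ^ n, by positivity, fun k hk δ hδ r hr => ?_⟩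
  set v : EuclideanSpace ℝ (Fin (n + 1)) := WithLp.toLp 2 (fun i => (k i : ℝ))
  have hk_norm : Real.sqrt (∑ i, ((k i : ℝ)) ^ 2) = ‖v‖ := by simp [v, EuclideanSpace.norm_eq]
  have hv : v ≠ 0 := fun h => hk (funext fun i => by simpa [v] using congr_arg (· i) h)
  have hf : LipschitzWith (‖v‖₊ / 2) fun x : EuclideanSpace ℝ (Fin (n + 1)) => r x.ofLp :=
    LipschitzWith.of_dist_le_mul fun x y => by
      simpa [Real.dist_eq, EuclideanSpace.dist_eq, hk_norm] using hr x.ofLp y.ofLp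
  calc volume {lam : Fin (n + 1) → ℝ | lam ∈ Ω ∧ |(∑ i, lam i * (k i : ℝ)) + r lam| < δ}
      = volume (WithLp.ofLp ⁻¹' {lam | lam ∈ Ω ∧ |(∑ i, lam i * (k i : ℝ)) + r lam| < δ}) :=
        ((EuclideanSpace.volume_preserving_symm_measurableEquiv_toLp _).measure_preimage_equiv
          _).symm
    _ ≤ volume {x ∈ closedBall 0 R | |inner ℝ x v + r x.ofLp| < δ} :=
        measure_mono fun x hx => ⟨hΩR hx.1, by simpa [v, PiLp.inner_apply, mul_comm] using hx.2⟩
    _ ≤ ENNReal.ofReal (4 * δ / ‖v‖) * ENNReal.ofReal (2 * R) ^ n :=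
        EuclideanSpace.volume_abs_inner_add_lt_le hv hf R δ
    _ = ENNReal.ofReal (4 * (2 * R) ^ n * δ / Real.sqrt (∑ i, ((k i : ℝ)) ^ 2)) := by
      rw [hk_norm, ← ENNReal.ofReal_pow (by positivity), ← ENNReal.ofReal_mul (by positivity)]
      ring_nf

/-- **Measure of a resonant set.** Let `Ω ⊂ ℝ^n` be bounded and
measurable, `k ∈ ℤ^n∖{0}`, `δ > 0`, and let `r : ℝ^n → ℝ` be Lipschitz (for the
Euclidean distance) with constant at most `|k|/2`.  Then
`|{λ ∈ Ω : |λ·k + r(λ)| < δ}| ≤ C(Ω) δ/|k|`. -/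
theorem resonant_set_measure (n : ℕ) (hn : 1 ≤ n) (Ω : Set (Fin n → ℝ))
    (hΩm : MeasurableSet Ω) (hΩb : Bornology.IsBounded Ω) :
    ∃ C : ℝ, 0 < C ∧
      ∀ (k : Fin n → ℤ), k ≠ 0 → ∀ δ : ℝ, 0 < δ →
        ∀ r : (Fin n → ℝ) → ℝ,
          (∀ x y : Fin n → ℝ,
            |r x - r y| ≤ Real.sqrt (∑ i, ((k i : ℝ)) ^ 2) / 2 *
              Real.sqrt (∑ i, (x i - y i) ^ 2)) →
          volume {lam : Fin n → ℝ | lam ∈ Ω ∧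
              |(∑ i, lam i * (k i : ℝ)) + r lam| < δ} ≤
            ENNReal.ofReal (C * δ / Real.sqrt (∑ i, ((k i : ℝ)) ^ 2)) :=
  resonant_set_measure_general n Ω hΩb

end
end
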